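/- arXiv:1610.04260 — 5 statements merged into one kernel-verified Lean document; each statement's English description precedes it below -/
import Mathlib

section
/- The point x_i = √(b_i/(a_i+λ)), with λ ≥ 0 the unique solution of Σ_i √(b_i/(a_i+λ)) = c, is the global minimizer of Σ_i (a_i·x_i + b_i/x_i) subject to x_i > 0 and Σ_i x_i ≤ c, provided Σ_i √(b_i/a_i) ≥ c. -/
/-! Weak Lagrangian duality: with multiplier `λ ≥ 0` for the budget `Σ xᵢ ≤ c`, the problem
separates into the one-dimensional problems `min_{z > 0} (aᵢ + λ) z + bᵢ / z`, each solved by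
`√(bᵢ / (aᵢ + λ))`; the budget is tight at these points, so their Lagrangian value is the
original objective. -/

open Finset

theorem mul_add_div_sqrt_div_le {p q z : ℝ} (hp : 0 < p) (hq : 0 < q) (hz : 0 < z) :
    p * √(q / p) + q / √(q / p) ≤ p * z + q / z := by
  set y := √(q / p)
  have hy : 0 < y := Real.sqrt_pos.mpr (div_pos hq hp)
  have hq_eq : q = p * y ^ 2 := by
    rw [Real.sq_sqrt (div_pos hq hp).le]
    field_simp
  have gap : p * z + q / z - (p * y + q / y) = p * (z - y) ^ 2 / z := by
    rw [hq_eq]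
    field_simp
    ring
  have : 0 ≤ p * (z - y) ^ 2 / z := by positivity
  linarith

theorem Finset.sum_le_sum_of_lagrangian_le {ι : Type*} (s : Finset ι) (f : ι → ℝ → ℝ)
    (x y : ι → ℝ) {l : ℝ} (hl : 0 ≤ l)
    (hmin : ∀ i ∈ s, f i (y i) + l * y i ≤ f i (x i) + l * x i)
    (hbudget : ∑ i ∈ s, x i ≤ ∑ i ∈ s, y i) :
    ∑ i ∈ s, f i (y i) ≤ ∑ i ∈ s, f i (x i) := by
  have hsum := sum_le_sum hmin
  simp only [sum_add_distrib, ← mul_sum] at hsum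
  linarith [mul_le_mul_of_nonneg_left hbudget hl]

theorem stmt4_general (n : ℕ) (a b : Fin n → ℝ) (c l : ℝ)
    (ha : ∀ i, 0 < a i) (hb : ∀ i, 0 < b i) (hl : 0 ≤ l)
    (hsol : ∑ i, Real.sqrt (b i / (a i + l)) = c) :
    ∀ x : Fin n → ℝ, (∀ i, 0 < x i) → (∑ i, x i) ≤ c →
      ∑ i, (a i * Real.sqrt (b i / (a i + l)) + b i / Real.sqrt (b i / (a i + l)))
        ≤ ∑ i, (a i * x i + b i / x i) := by
  intro x hx hxc
  refine sum_le_sum_of_lagrangian_le univ (fun i z => a i * z + b i / z) x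
    (fun i => √(b i / (a i + l))) hl (fun i _ => ?_) (hsol ▸ hxc)
  have := mul_add_div_sqrt_div_le (add_pos_of_pos_of_nonneg (ha i) hl) (hb i) (hx i)
  linarith

open Finset in
/-- The point `x_i = √(b_i/(a_i+λ))`, with `λ ≥ 0` solving `Σ_i √(b_i/(a_i+λ)) = c`,
is the global minimizer of `Σ_i (a_i·x_i + b_i/x_i)` subject to `x_i > 0` and
`Σ_i x_i ≤ c`, provided `Σ_i √(b_i/a_i) ≥ c`. -/
theorem stmt4 (n : ℕ) (a b : Fin n → ℝ) (c l : ℝ)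
    (ha : ∀ i, 0 < a i) (hb : ∀ i, 0 < b i) (hc : 0 < c) (hl : 0 ≤ l)
    (hsol : ∑ i, Real.sqrt (b i / (a i + l)) = c)
    (hslack : c ≤ ∑ i, Real.sqrt (b i / a i)) :
    ∀ x : Fin n → ℝ, (∀ i, 0 < x i) → (∑ i, x i) ≤ c →
      ∑ i, (a i * Real.sqrt (b i / (a i + l)) + b i / Real.sqrt (b i / (a i + l)))
        ≤ ∑ i, (a i * x i + b i / x i) :=
  stmt4_general n a b c l ha hb hl hsol
end

section
/- The continuous function J: [0,c] → ℝ defined by J(T) = a·T + Σ_{i: T < T̄_i} j_i·(1−ρ_i) + Σ_{i: T ≥ T̄_i} j_i·Δ_i/T + L (with J(0) interpreted by its right limit a·0 + Σ_i j_i·(1−ρ_i) + L) attains its minimum on [0,c], and the minimum is attained at some point of the finite set C ∪ C*, where C = {T̄_i : T̄_i < c} ∪ {0, c} and C* consists of interior stationary points c_k* = √((Σ_{i: T̄_i < c_{k+1}} j_i·Δ_i)/a) lying in (c_k, c_{k+1}). -/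
/-!
Writing `T̄_i = Δ_i/(1-ρ_i)`, the `i`-th summand equals `j_iΔ_i / max T T̄_i`, so `J` is continuous
and attains its minimum on the compact interval `[0,c]`. Away from `0`, `c` and the thresholds
`J` agrees near the minimiser `T₀` with `a T + S/T + K`, where `S = Σ_{T̄_i ≤ T₀} j_iΔ_i`;
Fermat's theorem gives `a - S/T₀² = 0`, i.e. `T₀ = √(S/a)`.
-/

open Finset Filter Topology

lemma ite_lt_div_sub_eq_div_max {x Δ ρ T : ℝ} (hΔ : Δ ≠ 0) (hρ : ρ ≠ 1) :
    (if T < Δ / (1 - ρ) then x * (1 - ρ) else x * Δ / T) = x * Δ / max T (Δ / (1 - ρ)) := by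
  split_ifs with h
  · rw [max_eq_right h.le]
    field_simp [sub_ne_zero.mpr hρ.symm]
  · rw [max_eq_left (not_lt.mp h)]

section ThresholdCost

variable {ι : Type*} [Fintype ι]

noncomputable def thresholdCost (a L : ℝ) (w t : ι → ℝ) (T : ℝ) : ℝ :=
  a * T + ∑ i, w i / max T (t i) + L

variable {a L : ℝ} {w t : ι → ℝ}

lemma continuous_thresholdCost (ht : ∀ i, 0 < t i) : Continuous (thresholdCost a L w t) := by
  refine ((continuous_const.mul continuous_id).add ?_).add continuous_const
  refine continuous_finsetSum _ fun i _ => continuous_const.div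
    (continuous_id.max continuous_const) fun T => ?_
  exact (lt_of_lt_of_le (ht i) (le_max_right T (t i))).ne'

lemma thresholdCost_eventuallyEq {T₀ : ℝ} (ht : ∀ i, t i ≠ T₀) :
    ∃ K, thresholdCost a L w t =ᶠ[𝓝 T₀]
      fun T => a * T + (∑ i, if t i ≤ T₀ then w i else 0) / T + K := by
  refine ⟨(∑ i, if t i ≤ T₀ then 0 else w i / t i) + L, ?_⟩
  have hside : ∀ i, ∀ᶠ T in 𝓝 T₀, (t i ≤ T₀ → t i ≤ T) ∧ (¬ t i ≤ T₀ → T ≤ t i) := by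
    intro i
    rcases (ht i).lt_or_gt with hlt | hgt
    · filter_upwards [eventually_gt_nhds hlt] with T hT
      exact ⟨fun _ => hT.le, fun h => absurd hlt.le h⟩
    · filter_upwards [eventually_lt_nhds hgt] with T hT
      exact ⟨fun h => absurd h (not_le.mpr hgt), fun _ => hT.le⟩
  filter_upwards [eventually_all.mpr hside] with T hT
  have hsum : ∑ i, w i / max T (t i) = (∑ i, if t i ≤ T₀ then w i else 0) / T
      + ∑ i, if t i ≤ T₀ then 0 else w i / t i := by
    rw [sum_div, ← sum_add_distrib]
    refine sum_congr rfl fun i _ => ?_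
    by_cases hi : t i ≤ T₀
    · simp only [if_pos hi, max_eq_left ((hT i).1 hi), add_zero]
    · simp only [if_neg hi, max_eq_right ((hT i).2 hi), zero_div, zero_add]
  rw [thresholdCost, hsum]
  ring

end ThresholdCost

lemma eq_sqrt_of_isLocalMin_of_eventuallyEq {f : ℝ → ℝ} {a S K T₀ : ℝ} (ha : a ≠ 0)
    (hT₀ : 0 < T₀) (hf : f =ᶠ[𝓝 T₀] fun T => a * T + S / T + K) (hmin : IsLocalMin f T₀) :
    T₀ = √(S / a) := by
  have hderiv : HasDerivAt (fun T => a * T + S / T + K) (a - S / T₀ ^ 2) T₀ := by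
    have hlin : HasDerivAt (fun T : ℝ => a * T) a T₀ := by
      simpa using (hasDerivAt_id T₀).const_mul a
    have hrecip : HasDerivAt (fun T : ℝ => S / T) (S * -(T₀ ^ 2)⁻¹) T₀ := by
      simpa [div_eq_mul_inv] using (hasDerivAt_inv hT₀.ne').const_mul S
    exact ((hlin.add hrecip).add_const K).congr_deriv (by ring)
  have hcrit : a - S / T₀ ^ 2 = 0 := hmin.hasDerivAt_eq_zero (hderiv.congr_of_eventuallyEq hf)
  have hS : S / a = T₀ ^ 2 := by
    field_simp at hcrit ⊢
    linarith
  rw [hS, Real.sqrt_sq hT₀.le]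

open Finset in
theorem stmt11_general (n : ℕ) (j Δ ρ : Fin n → ℝ) (a L c : ℝ)
    (hΔ : ∀ i, 0 < Δ i)
    (hρ1 : ∀ i, ρ i < 1)
    (ha : 0 < a) (hc : 0 < c)
    (Tbar : Fin n → ℝ) (hTbar : ∀ i, Tbar i = Δ i / (1 - ρ i))
    (J : ℝ → ℝ)
    (hJ : ∀ T, J T =
      a * T + (∑ i, if T < Tbar i then j i * (1 - ρ i) else j i * Δ i / T) + L) :
    ∃ T ∈ Set.Icc (0 : ℝ) c,
      (∀ T' ∈ Set.Icc (0 : ℝ) c, J T ≤ J T') ∧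
      (T = 0 ∨ T = c ∨ (∃ i, T = Tbar i ∧ Tbar i < c) ∨
        (0 < T ∧ T < c ∧
          T = Real.sqrt ((∑ i, if Tbar i ≤ T then j i * Δ i else 0) / a))) := by
  have hJ_eq : J = thresholdCost a L (fun i => j i * Δ i) Tbar := funext fun T => by
    simp only [hJ, thresholdCost, hTbar,
      ite_lt_div_sub_eq_div_max (hΔ _).ne' (hρ1 _).ne]
  have hTbar_pos : ∀ i, 0 < Tbar i := fun i => hTbar i ▸ div_pos (hΔ i) (sub_pos.mpr (hρ1 i))
  obtain ⟨T₀, hT₀, hmin⟩ := isCompact_Icc.exists_isMinOn (Set.nonempty_Icc.mpr hc.le)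
    (hJ_eq ▸ continuous_thresholdCost hTbar_pos).continuousOn
  refine ⟨T₀, hT₀, fun T' hT' => hmin hT', ?_⟩
  rcases hT₀.1.eq_or_lt with h0 | hpos
  · exact Or.inl h0.symm
  rcases hT₀.2.eq_or_lt with hc' | hlt
  · exact Or.inr (Or.inl hc')
  by_cases hthr : ∃ i, T₀ = Tbar i
  · obtain ⟨i, hi⟩ := hthr
    exact Or.inr (Or.inr (Or.inl ⟨i, hi, hi ▸ hlt⟩))
  rw [not_exists] at hthr
  obtain ⟨K, hK⟩ := thresholdCost_eventuallyEq (a := a) (L := L) (w := fun i => j i * Δ i)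
    fun i h => hthr i h.symm
  exact Or.inr (Or.inr (Or.inr ⟨hpos, hlt, eq_sqrt_of_isLocalMin_of_eventuallyEq ha.ne' hpos
    (hJ_eq ▸ hK) (hmin.isLocalMin (Icc_mem_nhds hpos hlt))⟩))

open Finset in
/-- The piecewise cost
`J(T) = a·T + Σ_{i:T<T̄_i} j_i(1−ρ_i) + Σ_{i:T≥T̄_i} j_iΔ_i/T + L`
attains its minimum on `[0,c]`, and the minimum is attained at `0`, at `c`, at
some threshold `T̄_i < c`, or at an interior stationary point
`T = √((Σ_{i:T̄_i≤T} j_iΔ_i)/a)`. -/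
theorem stmt11 (n : ℕ) (j Δ ρ : Fin n → ℝ) (a L c : ℝ)
    (hj : ∀ i, 0 < j i) (hΔ : ∀ i, 0 < Δ i)
    (hρ0 : ∀ i, 0 ≤ ρ i) (hρ1 : ∀ i, ρ i < 1)
    (ha : 0 < a) (hc : 0 < c)
    (Tbar : Fin n → ℝ) (hTbar : ∀ i, Tbar i = Δ i / (1 - ρ i))
    (J : ℝ → ℝ)
    (hJ : ∀ T, J T =
      a * T + (∑ i, if T < Tbar i then j i * (1 - ρ i) else j i * Δ i / T) + L) :
    ∃ T ∈ Set.Icc (0 : ℝ) c,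
      (∀ T' ∈ Set.Icc (0 : ℝ) c, J T ≤ J T') ∧
      (T = 0 ∨ T = c ∨ (∃ i, T = Tbar i ∧ Tbar i < c) ∨
        (0 < T ∧ T < c ∧
          T = Real.sqrt ((∑ i, if Tbar i ≤ T then j i * Δ i else 0) / a))) :=
  stmt11_general n j Δ ρ a L c hΔ hρ1 ha hc Tbar hTbar J hJ
end

section
/- In Case (1a), where m̄_i·s_i ≥ m̄_{i-1}·s_{i-1} and (m̄_i+1)·s_i ≥ (m̄_{i-1}+1)·s_{i-1}, the maximum queue size of function F_i under the common-period schedule is q_max = T·max{ ρ_i·(s_i(1−ρ_i) − s_{i-1}(1−ρ_{i-1})), (1−ρ_{i-1})·(s_{i-1}ρ_{i-1} − s_iρ_i) }. -/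
/-!
Over one period each function processes exactly `r T`, so the queue of `F_i` is `T`-periodic.
While the extra machine of `F_i` is on, the queue falls at rate at least
`(m̄_i+1)s_i − (m̄_{i-1}+1)s_{i-1}`, and while the extra machine of `F_{i-1}` is off it falls
at rate at least `m̄_i s_i − m̄_{i-1}s_{i-1}`; as it never becomes negative, it must hold at
least the drop over each of these two windows when the window opens. Both bounds are attained
by nesting the on-window of `F_i` inside that of `F_{i-1}`, opening it after the delay `X` for
which the queue built up at rate `(m̄_{i-1}+1)s_{i-1} − m̄_i s_i` is exactly drained by it:
over a period the queue then climbs from `0` to the first bound, returns to `0`, climbs to the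
second bound and returns to `0`.
-/

open Classical in
/-- Service rate of a function running `m̄` machines always and one extra machine of
speed `s` on during a periodically repeated window `[φ + kT, φ + kT + ρT)`. -/
noncomputable def onRate12 (T φ mbar ρ s t : ℝ) : ℝ :=
  if ∃ k : ℤ, φ + k * T ≤ t ∧ t < φ + k * T + ρ * T then (mbar + 1) * s else mbar * s

/-- Fluid queue trajectory of `F_i`: initial content `q0` plus the integral of
(input rate from `F_{i-1}`) minus (service rate of `F_i`). -/
noncomputable def qTraj12 (T φ0 m0 ρ0 s0 φ1 m1 ρ1 s1 q0 t : ℝ) : ℝ :=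
  q0 + ∫ x in (0 : ℝ)..t, (onRate12 T φ0 m0 ρ0 s0 x - onRate12 T φ1 m1 ρ1 s1 x)

open MeasureTheory Set Function intervalIntegral

section onRate

variable {T φ m ρ s t : ℝ}

theorem onRate12_eq_of_mem_on (k : ℤ) (ht : t ∈ Ico (φ + k * T) (φ + k * T + ρ * T)) :
    onRate12 T φ m ρ s t = (m + 1) * s :=
  if_pos ⟨k, ht⟩

theorem onRate12_eq_of_mem_off (hT : 0 ≤ T) (k : ℤ)
    (ht : t ∈ Ico (φ + k * T + ρ * T) (φ + (k + 1) * T)) :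
    onRate12 T φ m ρ s t = m * s := by
  refine if_neg ?_
  rintro ⟨j, hj₁, hj₂⟩
  rcases le_or_gt j k with hjk | hkj
  · have : (j : ℝ) ≤ k := mod_cast hjk
    nlinarith [ht.1]
  · have : (k : ℝ) + 1 ≤ j := mod_cast hkj
    nlinarith [ht.2]

theorem onRate12_le (hs : 0 ≤ s) : onRate12 T φ m ρ s t ≤ (m + 1) * s := by
  unfold onRate12; split <;> linarith

theorem le_onRate12 (hs : 0 ≤ s) : m * s ≤ onRate12 T φ m ρ s t := by
  unfold onRate12; split <;> linarith

variable (T φ m ρ s)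

theorem onRate12_periodic : Periodic (onRate12 T φ m ρ s) T := by
  classical
  intro t
  refine if_congr ⟨fun ⟨k, h₁, h₂⟩ => ⟨k - 1, ?_, ?_⟩, fun ⟨k, h₁, h₂⟩ => ⟨k + 1, ?_, ?_⟩⟩ rfl rfl <;>
    push_cast <;> linarith

theorem measurable_onRate12 : Measurable (onRate12 T φ m ρ s) := by
  have hwin : {t : ℝ | ∃ k : ℤ, φ + k * T ≤ t ∧ t < φ + k * T + ρ * T}
      = ⋃ k : ℤ, Ico (φ + k * T) (φ + k * T + ρ * T) := by
    ext t; simp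
  refine Measurable.ite ?_ measurable_const measurable_const
  rw [hwin]
  exact .iUnion fun k => measurableSet_Ico

theorem intervalIntegrable_onRate12 (a b : ℝ) :
    IntervalIntegrable (onRate12 T φ m ρ s) volume a b := by
  refine (intervalIntegrable_const (c := |m * s| + |(m + 1) * s|)).mono_fun'
    (measurable_onRate12 T φ m ρ s).aestronglyMeasurable (.of_forall fun x => ?_)
  dsimp only [onRate12]
  split <;> rw [Real.norm_eq_abs] <;> linarith [abs_nonneg (m * s), abs_nonneg ((m + 1) * s)]

end onRate

section primitive

variable {f Q : ℝ → ℝ} {a b c : ℝ}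

theorem primitive_eq_add_mul_of_eqOn (hQ : ∀ a b, Q b - Q a = ∫ x in a..b, f x) (hab : a ≤ b)
    (h : EqOn f (fun _ => c) (Ioo a b)) : Q b = Q a + c * (b - a) := by
  have := hQ a b
  rw [integral_congr_Ioo_of_le hab h, intervalIntegral.integral_const, smul_eq_mul] at this
  linarith

theorem primitive_le_add_mul_of_le (hQ : ∀ a b, Q b - Q a = ∫ x in a..b, f x)
    (hf : IntervalIntegrable f volume a b) (hab : a ≤ b) (h : ∀ x ∈ Ioo a b, f x ≤ c) :
    Q b ≤ Q a + c * (b - a) := by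
  have := integral_mono_on_of_le_Ioo hab hf intervalIntegrable_const h
  rw [intervalIntegral.integral_const, smul_eq_mul, ← hQ] at this
  linarith

theorem primitive_mem_of_eqOn {S : Set ℝ} [S.OrdConnected]
    (hQ : ∀ a b, Q b - Q a = ∫ x in a..b, f x) (hab : a ≤ b)
    (h : EqOn f (fun _ => c) (Ioo a b)) (ha : Q a ∈ S) (hb : Q b ∈ S) :
    ∀ t ∈ Icc a b, Q t ∈ S := by
  rintro t ⟨hat, htb⟩
  refine Set.OrdConnected.uIcc_subset ‹_› ha hb ?_
  rw [primitive_eq_add_mul_of_eqOn hQ hat (h.mono (Ioo_subset_Ioo_right htb)),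
    primitive_eq_add_mul_of_eqOn hQ hab h, mem_uIcc]
  rcases le_total 0 c with hc | hc
  · left; constructor <;> nlinarith
  · right; constructor <;> nlinarith

theorem primitive_periodic {T : ℝ} (hQ : ∀ a b, Q b - Q a = ∫ x in a..b, f x)
    (hf : Periodic f T) (h : Q (a + T) = Q a) : Periodic Q T := fun t => by
  rw [← sub_eq_zero, hQ, hf.intervalIntegral_add_eq t a, ← hQ, h, sub_self]

end primitive

theorem Function.Periodic.image_Ici {α β : Type*} [AddCommGroup α] [LinearOrder α]
    [IsOrderedAddMonoid α] [Archimedean α] {f : α → β} {c : α} (h : Periodic f c) (hc : 0 < c)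
    (a : α) : f '' Ici a = range f :=
  (image_subset_range _ _).antisymm <| h.image_Icc hc a ▸ image_mono Icc_subset_Ici_self

theorem exists_int_nonneg_add_mul {α : Type*} [Field α] [LinearOrder α] [IsStrictOrderedRing α]
    [Archimedean α] {T : α} (hT : 0 < T) (x : α) : ∃ k : ℤ, 0 ≤ x + k * T := by
  obtain ⟨k, hk, -⟩ := existsUnique_add_zsmul_mem_Ico hT x 0
  exact ⟨k, by simpa [zsmul_eq_mul] using hk.1⟩

noncomputable def drift12 (T φ0 m0 ρ0 s0 φ1 m1 ρ1 s1 x : ℝ) : ℝ :=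
  onRate12 T φ0 m0 ρ0 s0 x - onRate12 T φ1 m1 ρ1 s1 x

section queue

variable {T φ0 m0 ρ0 s0 φ1 m1 ρ1 s1 q0 : ℝ}

theorem intervalIntegrable_drift12 (a b : ℝ) :
    IntervalIntegrable (drift12 T φ0 m0 ρ0 s0 φ1 m1 ρ1 s1) volume a b :=
  (intervalIntegrable_onRate12 ..).sub (intervalIntegrable_onRate12 ..)

theorem drift12_periodic : Periodic (drift12 T φ0 m0 ρ0 s0 φ1 m1 ρ1 s1) T := fun t => by
  simp only [drift12, onRate12_periodic _ _ _ _ _ t]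

theorem qTraj12_sub_qTraj12 : ∀ a b,
    qTraj12 T φ0 m0 ρ0 s0 φ1 m1 ρ1 s1 q0 b - qTraj12 T φ0 m0 ρ0 s0 φ1 m1 ρ1 s1 q0 a
      = ∫ x in a..b, drift12 T φ0 m0 ρ0 s0 φ1 m1 ρ1 s1 x := fun a b => by
  have hint := intervalIntegrable_drift12 (T := T) (φ0 := φ0) (m0 := m0) (ρ0 := ρ0) (s0 := s0)
    (φ1 := φ1) (m1 := m1) (ρ1 := ρ1) (s1 := s1)
  change (q0 + ∫ x in (0 : ℝ)..b, drift12 T φ0 m0 ρ0 s0 φ1 m1 ρ1 s1 x)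
    - (q0 + ∫ x in (0 : ℝ)..a, drift12 T φ0 m0 ρ0 s0 φ1 m1 ρ1 s1 x) = _
  rw [← integral_add_adjacent_intervals (hint 0 a) (hint a b)]
  ring

end queue

section lowerBound

variable {T φ0 m0 ρ0 s0 φ1 m1 ρ1 s1 q0 M : ℝ}

theorem drain_on_window_le (hT : 0 < T) (hs0 : 0 ≤ s0) (hρ1 : 0 ≤ ρ1)
    (hnn : ∀ t ∈ Ici (0 : ℝ), 0 ≤ qTraj12 T φ0 m0 ρ0 s0 φ1 m1 ρ1 s1 q0 t)
    (hM : M ∈ upperBounds (qTraj12 T φ0 m0 ρ0 s0 φ1 m1 ρ1 s1 q0 '' Ici 0)) :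
    ((m1 + 1) * s1 - (m0 + 1) * s0) * (ρ1 * T) ≤ M := by
  obtain ⟨k, hk⟩ := exists_int_nonneg_add_mul hT φ1
  have hdrift : ∀ x ∈ Ioo (φ1 + k * T) (φ1 + k * T + ρ1 * T),
      drift12 T φ0 m0 ρ0 s0 φ1 m1 ρ1 s1 x ≤ (m0 + 1) * s0 - (m1 + 1) * s1 := fun x hx => by
    rw [drift12, onRate12_eq_of_mem_on k (Ioo_subset_Ico_self hx)]
    linarith [onRate12_le (T := T) (φ := φ0) (m := m0) (ρ := ρ0) (t := x) hs0]
  have hdrop := primitive_le_add_mul_of_le (qTraj12_sub_qTraj12 (q0 := q0))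
    (intervalIntegrable_drift12 _ _) (by nlinarith) hdrift
  have hend := hnn (φ1 + k * T + ρ1 * T) (by simp only [mem_Ici]; nlinarith)
  have hstart := hM ⟨_, hk, rfl⟩
  linarith

theorem drain_off_window_le (hT : 0 < T) (hs1 : 0 ≤ s1) (hρ0 : ρ0 ≤ 1)
    (hnn : ∀ t ∈ Ici (0 : ℝ), 0 ≤ qTraj12 T φ0 m0 ρ0 s0 φ1 m1 ρ1 s1 q0 t)
    (hM : M ∈ upperBounds (qTraj12 T φ0 m0 ρ0 s0 φ1 m1 ρ1 s1 q0 '' Ici 0)) :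
    (m1 * s1 - m0 * s0) * ((1 - ρ0) * T) ≤ M := by
  obtain ⟨k, hk⟩ := exists_int_nonneg_add_mul hT (φ0 + ρ0 * T)
  have hdrift : ∀ x ∈ Ioo (φ0 + k * T + ρ0 * T) (φ0 + (k + 1) * T),
      drift12 T φ0 m0 ρ0 s0 φ1 m1 ρ1 s1 x ≤ m0 * s0 - m1 * s1 := fun x hx => by
    rw [drift12, onRate12_eq_of_mem_off hT.le k (Ioo_subset_Ico_self hx)]
    linarith [le_onRate12 (T := T) (φ := φ1) (m := m1) (ρ := ρ1) (t := x) hs1]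
  have hdrop := primitive_le_add_mul_of_le (qTraj12_sub_qTraj12 (q0 := q0))
    (intervalIntegrable_drift12 _ _) (by nlinarith) hdrift
  have hend := hnn (φ0 + (k + 1) * T) (by simp only [mem_Ici]; nlinarith)
  have hstart := hM ⟨φ0 + k * T + ρ0 * T, by simp only [mem_Ici]; linarith, rfl⟩
  linarith

end lowerBound

section construction

variable {T φ0 m0 ρ0 s0 m1 ρ1 s1 X : ℝ}

theorem drift12_eqOn_of_nested_windows (hT : 0 ≤ T) (hρ0 : ρ0 ≤ 1) (hρ1 : 0 ≤ ρ1) (hX : 0 ≤ X)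
    (hXρ : X + ρ1 * T ≤ ρ0 * T) :
    EqOn (drift12 T φ0 m0 ρ0 s0 (φ0 + X) m1 ρ1 s1) (fun _ => (m0 + 1) * s0 - m1 * s1)
        (Ioo φ0 (φ0 + X)) ∧
      EqOn (drift12 T φ0 m0 ρ0 s0 (φ0 + X) m1 ρ1 s1) (fun _ => (m0 + 1) * s0 - (m1 + 1) * s1)
        (Ioo (φ0 + X) (φ0 + X + ρ1 * T)) ∧
      EqOn (drift12 T φ0 m0 ρ0 s0 (φ0 + X) m1 ρ1 s1) (fun _ => (m0 + 1) * s0 - m1 * s1)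
        (Ioo (φ0 + X + ρ1 * T) (φ0 + ρ0 * T)) ∧
      EqOn (drift12 T φ0 m0 ρ0 s0 (φ0 + X) m1 ρ1 s1) (fun _ => m0 * s0 - m1 * s1)
        (Ioo (φ0 + ρ0 * T) (φ0 + T)) := by
  have hρ1T : 0 ≤ ρ1 * T := mul_nonneg hρ1 hT
  have hρ0T : ρ0 * T ≤ T := by nlinarith
  refine ⟨fun x hx => ?_, fun x hx => ?_, fun x hx => ?_, fun x hx => ?_⟩ <;>
    obtain ⟨hx₁, hx₂⟩ := hx <;> simp only [drift12]
  · rw [onRate12_eq_of_mem_on 0 (by push_cast; constructor <;> linarith),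
      onRate12_eq_of_mem_off hT (-1) (by push_cast; constructor <;> linarith)]
  · rw [onRate12_eq_of_mem_on 0 (by push_cast; constructor <;> linarith),
      onRate12_eq_of_mem_on 0 (by push_cast; constructor <;> linarith)]
  · rw [onRate12_eq_of_mem_on 0 (by push_cast; constructor <;> linarith),
      onRate12_eq_of_mem_off hT 0 (by push_cast; constructor <;> linarith)]
  · rw [onRate12_eq_of_mem_off hT 0 (by push_cast; constructor <;> linarith),
      onRate12_eq_of_mem_off hT 0 (by push_cast; constructor <;> linarith)]

theorem exists_nested_delay (hT : 0 ≤ T) (hρ0 : ρ0 ≤ 1) (hρ1 : 0 ≤ ρ1)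
    (hA : m1 * s1 < (m0 + 1) * s0) (hB : (m0 + 1) * s0 ≤ (m1 + 1) * s1)
    (hC : m0 * s0 ≤ m1 * s1) (hmean : (m0 + ρ0) * s0 = (m1 + ρ1) * s1) :
    ∃ X, 0 ≤ X ∧ X + ρ1 * T ≤ ρ0 * T ∧
      ((m0 + 1) * s0 - m1 * s1) * X = ((m1 + 1) * s1 - (m0 + 1) * s0) * (ρ1 * T) ∧
      ((m0 + 1) * s0 - m1 * s1) * (ρ0 * T - (X + ρ1 * T))
        = (m1 * s1 - m0 * s0) * ((1 - ρ0) * T) := by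
  set A := (m0 + 1) * s0 - m1 * s1
  set H₁ := ((m1 + 1) * s1 - (m0 + 1) * s0) * (ρ1 * T)
  set H₂ := (m1 * s1 - m0 * s0) * ((1 - ρ0) * T)
  have hA₀ : 0 < A := sub_pos.2 hA
  have hH₁ : 0 ≤ H₁ := mul_nonneg (by linarith) (mul_nonneg hρ1 hT)
  have hH₂ : 0 ≤ H₂ := mul_nonneg (by linarith) (mul_nonneg (by linarith) hT)
  have hAX : A * (H₁ / A) = H₁ := mul_div_cancel₀ _ hA₀.ne'
  have hgap : A * (ρ0 * T - (H₁ / A + ρ1 * T)) = H₂ := by linear_combination T * hmean - hAX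
  exact ⟨H₁ / A, div_nonneg hH₁ hA₀.le,
    sub_nonneg.1 (nonneg_of_mul_nonneg_right (hgap ▸ hH₂) hA₀), hAX, hgap⟩

theorem exists_qTraj12_isGreatest (hT : 0 < T) (hρ0 : ρ0 ≤ 1) (hρ1 : 0 ≤ ρ1)
    (hA : m1 * s1 < (m0 + 1) * s0) (hB : (m0 + 1) * s0 ≤ (m1 + 1) * s1)
    (hC : m0 * s0 ≤ m1 * s1) (hmean : (m0 + ρ0) * s0 = (m1 + ρ1) * s1) :
    ∃ φ1 q0 : ℝ, (∀ t, 0 ≤ qTraj12 T φ0 m0 ρ0 s0 φ1 m1 ρ1 s1 q0 t) ∧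
      IsGreatest (qTraj12 T φ0 m0 ρ0 s0 φ1 m1 ρ1 s1 q0 '' Ici 0)
        (max (((m1 + 1) * s1 - (m0 + 1) * s0) * (ρ1 * T))
          ((m1 * s1 - m0 * s0) * ((1 - ρ0) * T))) := by
  obtain ⟨X, hX, hXρ, hrise₁, hrise₂⟩ := exists_nested_delay hT.le hρ0 hρ1 hA hB hC hmean
  set H₁ := ((m1 + 1) * s1 - (m0 + 1) * s0) * (ρ1 * T)
  set H₂ := (m1 * s1 - m0 * s0) * ((1 - ρ0) * T)
  have hH₁ : 0 ≤ H₁ := mul_nonneg (by linarith) (mul_nonneg hρ1 hT.le)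
  have hH₂ : 0 ≤ H₂ := mul_nonneg (by linarith) (mul_nonneg (by linarith) hT.le)
  obtain ⟨e₁, e₂, e₃, e₄⟩ := drift12_eqOn_of_nested_windows (φ0 := φ0) (m0 := m0) (s0 := s0)
    (m1 := m1) (s1 := s1) hT.le hρ0 hρ1 hX hXρ
  set q0 := -∫ x in (0 : ℝ)..φ0, drift12 T φ0 m0 ρ0 s0 (φ0 + X) m1 ρ1 s1 x
  set q := qTraj12 T φ0 m0 ρ0 s0 (φ0 + X) m1 ρ1 s1 q0
  have hq : ∀ a b, q b - q a = ∫ x in a..b, drift12 T φ0 m0 ρ0 s0 (φ0 + X) m1 ρ1 s1 x :=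
    qTraj12_sub_qTraj12
  have v₀ : q φ0 = 0 := neg_add_cancel _
  have v₁ : q (φ0 + X) = H₁ := by
    rw [primitive_eq_add_mul_of_eqOn hq (by linarith) e₁, v₀]; linear_combination hrise₁
  have v₂ : q (φ0 + X + ρ1 * T) = 0 := by
    rw [primitive_eq_add_mul_of_eqOn hq (by nlinarith) e₂, v₁]; ring
  have v₃ : q (φ0 + ρ0 * T) = H₂ := by
    rw [primitive_eq_add_mul_of_eqOn hq (by linarith) e₃, v₂]; linear_combination hrise₂
  have v₄ : q (φ0 + T) = 0 := by
    rw [primitive_eq_add_mul_of_eqOn hq (by nlinarith) e₄, v₃]; ring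
  have hper : Periodic q T := primitive_periodic hq drift12_periodic (v₄.trans v₀.symm)
  have hbound : ∀ t ∈ Icc φ0 (φ0 + T), q t ∈ Icc 0 (max H₁ H₂) := by
    have b₀ : q φ0 ∈ Icc 0 (max H₁ H₂) := ⟨v₀.ge, v₀ ▸ le_max_of_le_left hH₁⟩
    have b₁ : q (φ0 + X) ∈ Icc 0 (max H₁ H₂) := ⟨v₁ ▸ hH₁, v₁ ▸ le_max_left _ _⟩
    have b₂ : q (φ0 + X + ρ1 * T) ∈ Icc 0 (max H₁ H₂) := ⟨v₂.ge, v₂ ▸ le_max_of_le_left hH₁⟩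
    have b₃ : q (φ0 + ρ0 * T) ∈ Icc 0 (max H₁ H₂) := ⟨v₃ ▸ hH₂, v₃ ▸ le_max_right _ _⟩
    have b₄ : q (φ0 + T) ∈ Icc 0 (max H₁ H₂) := ⟨v₄.ge, v₄ ▸ le_max_of_le_left hH₁⟩
    rintro t ⟨ht₀, ht₄⟩
    rcases le_total t (φ0 + X) with ht₁ | ht₁
    · exact primitive_mem_of_eqOn hq (by linarith) e₁ b₀ b₁ t ⟨ht₀, ht₁⟩
    rcases le_total t (φ0 + X + ρ1 * T) with ht₂ | ht₂
    · exact primitive_mem_of_eqOn hq (by nlinarith) e₂ b₁ b₂ t ⟨ht₁, ht₂⟩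
    rcases le_total t (φ0 + ρ0 * T) with ht₃ | ht₃
    · exact primitive_mem_of_eqOn hq (by linarith) e₃ b₂ b₃ t ⟨ht₂, ht₃⟩
    · exact primitive_mem_of_eqOn hq (by nlinarith) e₄ b₃ b₄ t ⟨ht₃, ht₄⟩
  refine ⟨φ0 + X, q0, fun t => ?_, ?_⟩
  · obtain ⟨y, hy, hyt⟩ := hper.exists_mem_Ico hT t φ0
    show 0 ≤ q t
    rw [hyt]; exact (hbound y (Ico_subset_Icc_self hy)).1
  · show IsGreatest (q '' Ici 0) _
    rw [hper.image_Ici hT, ← hper.image_Icc hT φ0]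
    refine ⟨?_, fun _ ⟨t, ht, hqt⟩ => hqt ▸ (hbound t ht).2⟩
    rcases max_choice H₁ H₂ with h | h <;> rw [h]
    · exact ⟨φ0 + X, ⟨by linarith, by nlinarith⟩, v₁⟩
    · exact ⟨φ0 + ρ0 * T, ⟨by nlinarith, by nlinarith⟩, v₃⟩

end construction

theorem stmt12_general (r s0 s1 T φ0 m0 m1 ρ0 ρ1 : ℝ)
    (hs0 : 0 < s0) (hs1 : 0 < s1) (hT : 0 < T)
    (hm0 : m0 = (⌊r / s0⌋ : ℤ)) (hρ0 : ρ0 = r / s0 - m0)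
    (hm1 : m1 = (⌊r / s1⌋ : ℤ)) (hρ1 : ρ1 = r / s1 - m1)
    (hcase1 : m0 * s0 ≤ m1 * s1) (hcase2 : (m0 + 1) * s0 ≤ (m1 + 1) * s1) :
    ∃ φ1 q0 : ℝ,
      (∀ t ∈ Set.Ici (0 : ℝ), 0 ≤ qTraj12 T φ0 m0 ρ0 s0 φ1 m1 ρ1 s1 q0 t) ∧
      IsLUB ((fun t => qTraj12 T φ0 m0 ρ0 s0 φ1 m1 ρ1 s1 q0 t) '' Set.Ici (0 : ℝ))
        (T * max (ρ1 * (s1 * (1 - ρ1) - s0 * (1 - ρ0)))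
                 ((1 - ρ0) * (s0 * ρ0 - s1 * ρ1))) ∧
      (∀ φ1' q0' : ℝ,
        (∀ t ∈ Set.Ici (0 : ℝ), 0 ≤ qTraj12 T φ0 m0 ρ0 s0 φ1' m1 ρ1 s1 q0' t) →
        ∀ M : ℝ,
          IsLUB ((fun t => qTraj12 T φ0 m0 ρ0 s0 φ1' m1 ρ1 s1 q0' t) ''
            Set.Ici (0 : ℝ)) M →
          T * max (ρ1 * (s1 * (1 - ρ1) - s0 * (1 - ρ0)))
                  ((1 - ρ0) * (s0 * ρ0 - s1 * ρ1)) ≤ M) := by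
  have hρ0' : ρ0 ∈ Ico 0 1 := by
    rw [hρ0, hm0, Int.self_sub_floor]; exact ⟨Int.fract_nonneg _, Int.fract_lt_one _⟩
  have hρ1' : ρ1 ∈ Ico 0 1 := by
    rw [hρ1, hm1, Int.self_sub_floor]; exact ⟨Int.fract_nonneg _, Int.fract_lt_one _⟩
  have hmean : (m0 + ρ0) * s0 = (m1 + ρ1) * s1 := by
    rw [hρ0, hρ1, add_sub_cancel, add_sub_cancel, div_mul_cancel₀ _ hs0.ne',
      div_mul_cancel₀ _ hs1.ne']
  have hA : m1 * s1 < (m0 + 1) * s0 := by nlinarith [hρ0'.2, hρ1'.1]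
  have hval : T * max (ρ1 * (s1 * (1 - ρ1) - s0 * (1 - ρ0))) ((1 - ρ0) * (s0 * ρ0 - s1 * ρ1))
      = max (((m1 + 1) * s1 - (m0 + 1) * s0) * (ρ1 * T))
          ((m1 * s1 - m0 * s0) * ((1 - ρ0) * T)) := by
    rw [mul_max_of_nonneg _ _ hT.le]
    congr 1
    · linear_combination (ρ1 * T) * hmean
    · linear_combination ((1 - ρ0) * T) * hmean
  obtain ⟨φ1, q0, hnn, hmax⟩ :=
    exists_qTraj12_isGreatest (φ0 := φ0) hT hρ0'.2.le hρ1'.1 hA hcase2 hcase1 hmean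
  refine ⟨φ1, q0, fun t _ => hnn t, hval ▸ hmax.isLUB, fun φ1' q0' hnn' M hM => hval ▸ ?_⟩
  exact max_le (drain_on_window_le hT hs0.le hρ1'.1 hnn' hM.1)
    (drain_off_window_le hT hs1.le hρ0'.2.le hnn' hM.1)

/-- Case (1a) (`m̄_i s_i ≥ m̄_{i-1} s_{i-1}` and `(m̄_i+1)s_i ≥ (m̄_{i-1}+1)s_{i-1}`):
placing the on-window of `F_i` so that the queue stays nonnegative and its maximum
is minimized, the maximum queue size equals
`T·max{ρ_i(s_i(1−ρ_i) − s_{i-1}(1−ρ_{i-1})), (1−ρ_{i-1})(s_{i-1}ρ_{i-1} − s_iρ_i)}`. -/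
theorem stmt12 (r s0 s1 T φ0 m0 m1 ρ0 ρ1 : ℝ)
    (hr : 0 < r) (hs0 : 0 < s0) (hs1 : 0 < s1) (hT : 0 < T)
    (hm0 : m0 = (⌊r / s0⌋ : ℤ)) (hρ0 : ρ0 = r / s0 - m0)
    (hm1 : m1 = (⌊r / s1⌋ : ℤ)) (hρ1 : ρ1 = r / s1 - m1)
    (hcase1 : m0 * s0 ≤ m1 * s1) (hcase2 : (m0 + 1) * s0 ≤ (m1 + 1) * s1) :
    ∃ φ1 q0 : ℝ,
      (∀ t ∈ Set.Ici (0 : ℝ), 0 ≤ qTraj12 T φ0 m0 ρ0 s0 φ1 m1 ρ1 s1 q0 t) ∧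
      IsLUB ((fun t => qTraj12 T φ0 m0 ρ0 s0 φ1 m1 ρ1 s1 q0 t) '' Set.Ici (0 : ℝ))
        (T * max (ρ1 * (s1 * (1 - ρ1) - s0 * (1 - ρ0)))
                 ((1 - ρ0) * (s0 * ρ0 - s1 * ρ1))) ∧
      (∀ φ1' q0' : ℝ,
        (∀ t ∈ Set.Ici (0 : ℝ), 0 ≤ qTraj12 T φ0 m0 ρ0 s0 φ1' m1 ρ1 s1 q0' t) →
        ∀ M : ℝ,
          IsLUB ((fun t => qTraj12 T φ0 m0 ρ0 s0 φ1' m1 ρ1 s1 q0' t) ''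
            Set.Ici (0 : ℝ)) M →
          T * max (ρ1 * (s1 * (1 - ρ1) - s0 * (1 - ρ0)))
                  ((1 - ρ0) * (s0 * ρ0 - s1 * ρ1)) ≤ M) :=
  stmt12_general r s0 s1 T φ0 m0 m1 ρ0 ρ1 hs0 hs1 hT hm0 hρ0 hm1 hρ1 hcase1 hcase2
end

section
/- For any two consecutive functions, the maximum queue size q_max_i = T·α_i with α_i = max{ ρ_i(s_i(1−ρ_i) − s_{i-1}(1−ρ_{i-1})), (1−ρ_{i-1})(s_{i-1}ρ_{i-1} − s_iρ_i), ρ_{i-1}(s_{i-1}(1−ρ_{i-1}) − s_i(1−ρ_i)), (1−ρ_i)(s_iρ_i − s_{i-1}ρ_{i-1}) } is nonnegative and bounded above by T·max{s_{i-1}, s_i}, for all ρ_{i-1}, ρ_i ∈ [0,1) and s_{i-1}, s_i > 0. -/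
/-! Of the two differences `s₁(1-ρ₁) - s₀(1-ρ₀)` and its negative one is nonnegative, so
the first or the third case expression is nonnegative. Each case expression has the form
`p (s q - c)` with `p, q ∈ [0,1]` and `c ≥ 0`, hence is at most `s`. -/

lemma le_max_mul_sub_mul_sub {x y a b : ℝ} (hx : 0 ≤ x) (hy : 0 ≤ y) :
    0 ≤ max (x * (a - b)) (y * (b - a)) := by
  rcases le_total b a with h | h
  · exact le_max_of_le_left (mul_nonneg hx (sub_nonneg.2 h))
  · exact le_max_of_le_right (mul_nonneg hy (sub_nonneg.2 h))

lemma mul_mul_sub_le {p q s c : ℝ} (hp0 : 0 ≤ p) (hp1 : p ≤ 1) (hq1 : q ≤ 1)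
    (hs : 0 ≤ s) (hc : 0 ≤ c) : p * (s * q - c) ≤ s := by
  have hpq : p * q ≤ 1 := by nlinarith [mul_le_mul_of_nonneg_left hq1 hp0]
  calc p * (s * q - c) ≤ p * (s * q) := mul_le_mul_of_nonneg_left (by linarith) hp0
    _ = s * (p * q) := by ring
    _ ≤ s * 1 := mul_le_mul_of_nonneg_left hpq hs
    _ = s := mul_one s

/-- The coefficient `α_i` in `q_max_i = T·α_i` (maximum over the four case
expressions) is nonnegative and `q_max_i ≤ T·max{s_{i-1}, s_i}`, for all
`ρ_{i-1}, ρ_i ∈ [0,1)` and speeds `s_{i-1}, s_i > 0`: the maximum queue size is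
bounded regardless of the input rate. -/
theorem stmt13 (s0 s1 ρ0 ρ1 T : ℝ) (hs0 : 0 < s0) (hs1 : 0 < s1)
    (hρ00 : 0 ≤ ρ0) (hρ01 : ρ0 < 1) (hρ10 : 0 ≤ ρ1) (hρ11 : ρ1 < 1) (hT : 0 < T) :
    0 ≤ max (max (ρ1 * (s1 * (1 - ρ1) - s0 * (1 - ρ0)))
                 ((1 - ρ0) * (s0 * ρ0 - s1 * ρ1)))
            (max (ρ0 * (s0 * (1 - ρ0) - s1 * (1 - ρ1)))
                 ((1 - ρ1) * (s1 * ρ1 - s0 * ρ0))) ∧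
    T * max (max (ρ1 * (s1 * (1 - ρ1) - s0 * (1 - ρ0)))
                 ((1 - ρ0) * (s0 * ρ0 - s1 * ρ1)))
            (max (ρ0 * (s0 * (1 - ρ0) - s1 * (1 - ρ1)))
                 ((1 - ρ1) * (s1 * ρ1 - s0 * ρ0)))
      ≤ T * max s0 s1 := by
  have hσ0 : 0 ≤ 1 - ρ0 := by linarith
  have hσ1 : 0 ≤ 1 - ρ1 := by linarith
  refine ⟨(le_max_mul_sub_mul_sub hρ10 hρ00).trans
      (max_le_max (le_max_left _ _) (le_max_left _ _)), ?_⟩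
  refine mul_le_mul_of_nonneg_left (max_le (max_le ?_ ?_) (max_le ?_ ?_)) hT.le
  · exact le_max_of_le_right <| mul_mul_sub_le hρ10 hρ11.le (by linarith) hs1.le
      (mul_nonneg hs0.le hσ0)
  · exact le_max_of_le_left <| mul_mul_sub_le hσ0 (by linarith) hρ01.le hs0.le
      (mul_nonneg hs1.le hρ10)
  · exact le_max_of_le_left <| mul_mul_sub_le hρ00 hρ01.le (by linarith) hs0.le
      (mul_nonneg hs1.le hσ1)
  · exact le_max_of_le_right <| mul_mul_sub_le hσ1 (by linarith) hρ11.le hs1.le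
      (mul_nonneg hs0.le hρ00)
end

section
/- In Case (2b) the per-stage delay increment is D_i* = (T/r)·s_i·(1−ρ_i)²·(s_iρ_i + s_{i-1}ρ_{i-1})/(s_i(1−ρ_i) + s_{i-1}ρ_{i-1}), which is nonnegative whenever ρ_{i-1}, ρ_i ∈ [0,1) and s_{i-1}, s_i > 0. -/
section CaseTwoB

variable {K : Type*} [Field K]

/-- The `s_{i-1}ρ_{i-1}` share of the denominator cancels against the second term,
leaving the factor `s_i(1-ρ_i)/(s_i(1-ρ_i) + s_{i-1}ρ_{i-1})` on `q/r`. -/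
theorem caseTwoB_increment_eq (r s0 s1 ρ0 ρ1 T : K) (hden : s1 * (1 - ρ1) + s0 * ρ0 ≠ 0) :
    (T * (1 - ρ1) * (s1 * ρ1 + s0 * ρ0)) / r +
        (s0 / r) *
          (-(T * (1 - ρ1) * (s1 * ρ1 + s0 * ρ0)) / (s1 * (1 - ρ1) + s0 * ρ0)) * ρ0
      = (T / r) * s1 * (1 - ρ1) ^ 2 *
          ((s1 * ρ1 + s0 * ρ0) / (s1 * (1 - ρ1) + s0 * ρ0)) := by
  have hinv : (s1 * (1 - ρ1) + s0 * ρ0) * (s1 * (1 - ρ1) + s0 * ρ0)⁻¹ = 1 := mul_inv_cancel₀ hden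
  simp only [div_eq_mul_inv]
  linear_combination (-(T * (1 - ρ1) * (s1 * ρ1 + s0 * ρ0) * r⁻¹)) * hinv

theorem caseTwoB_increment_nonneg [LinearOrder K] [IsStrictOrderedRing K] {r s0 s1 ρ0 ρ1 T : K}
    (hr : 0 ≤ r) (hT : 0 ≤ T) (hs0 : 0 ≤ s0) (hs1 : 0 ≤ s1) (hρ0 : 0 ≤ ρ0) (hρ1 : 0 ≤ ρ1)
    (hρ1_le : ρ1 ≤ 1) :
    0 ≤ (T / r) * s1 * (1 - ρ1) ^ 2 *
          ((s1 * ρ1 + s0 * ρ0) / (s1 * (1 - ρ1) + s0 * ρ0)) := by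
  have hnum : 0 ≤ s1 * ρ1 + s0 * ρ0 := by positivity
  have hden : 0 ≤ s1 * (1 - ρ1) + s0 * ρ0 := by
    have : 0 ≤ 1 - ρ1 := sub_nonneg.mpr hρ1_le
    positivity
  positivity

end CaseTwoB

theorem stmt16_general (r s0 s1 ρ0 ρ1 T : ℝ) (hr : 0 < r) (hs0 : 0 < s0) (hs1 : 0 < s1)
    (hρ00 : 0 ≤ ρ0) (hρ10 : 0 ≤ ρ1) (hρ11 : ρ1 < 1) (hT : 0 < T) :
    (T * (1 - ρ1) * (s1 * ρ1 + s0 * ρ0)) / r +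
        (s0 / r) *
          (-(T * (1 - ρ1) * (s1 * ρ1 + s0 * ρ0)) / (s1 * (1 - ρ1) + s0 * ρ0)) * ρ0
      = (T / r) * s1 * (1 - ρ1) ^ 2 *
          ((s1 * ρ1 + s0 * ρ0) / (s1 * (1 - ρ1) + s0 * ρ0)) ∧
    0 ≤ (T / r) * s1 * (1 - ρ1) ^ 2 *
          ((s1 * ρ1 + s0 * ρ0) / (s1 * (1 - ρ1) + s0 * ρ0)) := by
  have hden : 0 < s1 * (1 - ρ1) + s0 * ρ0 := by
    have : 0 < 1 - ρ1 := sub_pos.mpr hρ11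
    positivity
  exact ⟨caseTwoB_increment_eq r s0 s1 ρ0 ρ1 T hden.ne',
    caseTwoB_increment_nonneg hr.le hT.le hs0.le hs1.le hρ00 hρ10 hρ11.le⟩

/-- Case (2b) per-stage delay increment: with
`q = T(1−ρ_i)(s_iρ_i + s_{i-1}ρ_{i-1})` and
`Δt = −q/(s_i(1−ρ_i) + s_{i-1}ρ_{i-1})`, the increment
`D* = q/r + (s_{i-1}/r)·Δt·ρ_{i-1}` equals
`(T/r)·s_i·(1−ρ_i)²·(s_iρ_i + s_{i-1}ρ_{i-1})/(s_i(1−ρ_i) + s_{i-1}ρ_{i-1})`,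
which is nonnegative for `ρ_{i-1}, ρ_i ∈ [0,1)`, `s_{i-1}, s_i > 0`. -/
theorem stmt16 (r s0 s1 ρ0 ρ1 T : ℝ) (hr : 0 < r) (hs0 : 0 < s0) (hs1 : 0 < s1)
    (hρ00 : 0 ≤ ρ0) (hρ01 : ρ0 < 1) (hρ10 : 0 ≤ ρ1) (hρ11 : ρ1 < 1) (hT : 0 < T) :
    (T * (1 - ρ1) * (s1 * ρ1 + s0 * ρ0)) / r +
        (s0 / r) *
          (-(T * (1 - ρ1) * (s1 * ρ1 + s0 * ρ0)) / (s1 * (1 - ρ1) + s0 * ρ0)) * ρ0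
      = (T / r) * s1 * (1 - ρ1) ^ 2 *
          ((s1 * ρ1 + s0 * ρ0) / (s1 * (1 - ρ1) + s0 * ρ0)) ∧
    0 ≤ (T / r) * s1 * (1 - ρ1) ^ 2 *
          ((s1 * ρ1 + s0 * ρ0) / (s1 * (1 - ρ1) + s0 * ρ0)) :=
  stmt16_general r s0 s1 ρ0 ρ1 T hr hs0 hs1 hρ00 hρ10 hρ11 hT
end
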